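/- arXiv:1906.08384 — 2 statements merged into one kernel-verified Lean document; each statement's English description precedes it below -/
import Mathlib

section
/- An E-graph G = (V,E) in ℝⁿ is endotactic if and only if for every w ∈ ℝⁿ, the one-dimensional projection of G along w is endotactic; i.e., G is endotactic iff for every w ∈ ℝ, the E-graph in ℝ with edges (w·s, w·s') for (s,s') ∈ E is endotactic. -/
/-- An E-graph (given by its finite edge set) is endotactic. -/
def IsEndotactic {n : ℕ}
    (E : Finset (EuclideanSpace ℝ (Fin n) × EuclideanSpace ℝ (Fin n))) : Prop :=
  ∀ w : EuclideanSpace ℝ (Fin n), ∀ e ∈ E, (inner ℝ w (e.2 - e.1) : ℝ) < 0 →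
    ∃ f ∈ E, (0 : ℝ) < inner ℝ w (f.2 - f.1) ∧ (inner ℝ w f.1 : ℝ) < inner ℝ w e.1

/-- A one-dimensional E-graph (given by a set of edges in ℝ) is endotactic. -/
def IsEndotactic1D (E : Set (ℝ × ℝ)) : Prop :=
  ∀ c : ℝ, ∀ e ∈ E, c * (e.2 - e.1) < 0 →
    ∃ f ∈ E, 0 < c * (f.2 - f.1) ∧ c * f.1 < c * e.1

open scoped RealInnerProductSpace

def IsEndotacticAlong {V : Type*} [NormedAddCommGroup V] [InnerProductSpace ℝ V]
    (E : Set (V × V)) (w : V) : Prop :=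
  ∀ e ∈ E, ⟪w, e.2 - e.1⟫ < 0 → ∃ f ∈ E, 0 < ⟪w, f.2 - f.1⟫ ∧ ⟪w, f.1⟫ < ⟪w, e.1⟫

theorem isEndotactic_iff_forall_isEndotacticAlong {n : ℕ}
    (E : Finset (EuclideanSpace ℝ (Fin n) × EuclideanSpace ℝ (Fin n))) :
    IsEndotactic E ↔ ∀ w, IsEndotacticAlong (↑E : Set (EuclideanSpace ℝ (Fin n) × _)) w :=
  Iff.rfl

theorem isEndotactic1D_image_inner_iff {V : Type*} [NormedAddCommGroup V]
    [InnerProductSpace ℝ V] (E : Set (V × V)) (w : V) :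
    IsEndotactic1D ((fun e : V × V => (⟪w, e.1⟫, ⟪w, e.2⟫)) '' E) ↔
      ∀ c : ℝ, IsEndotacticAlong E (c • w) := by
  simp only [IsEndotactic1D, IsEndotacticAlong, Set.forall_mem_image, Set.exists_mem_image,
    real_inner_smul_left, inner_sub_right, mul_sub]

/-- An E-graph is endotactic iff all of its one-dimensional projections are endotactic. -/
theorem endotactic_iff_projections_endotactic {n : ℕ}
    (E : Finset (EuclideanSpace ℝ (Fin n) × EuclideanSpace ℝ (Fin n))) :
    IsEndotactic E ↔
      ∀ w : EuclideanSpace ℝ (Fin n),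
        IsEndotactic1D ((fun e : EuclideanSpace ℝ (Fin n) × EuclideanSpace ℝ (Fin n) =>
          ((inner ℝ w e.1 : ℝ), (inner ℝ w e.2 : ℝ))) '' (E : Set _)) := by
  simp only [isEndotactic_iff_forall_isEndotacticAlong, isEndotactic1D_image_inner_iff]
  exact ⟨fun h w c => h (c • w), fun h w => one_smul ℝ w ▸ h w 1⟩
end

section
/- Let w ∈ ℝⁿ with ‖w‖ > 0, let u₁,...,uᵣ ∈ ℝⁿ with u₁·w > 0, let ε = sqrt( min{uᵢ·w : uᵢ·w > 0} / (2‖w‖ ∑ᵢ‖uᵢ‖) ) (assumed positive and well-defined), and set k₁ = 1/ε and kᵢ = ε for i ≥ 2. Then ((k₁/2)u₁ + ∑_{i=2}^r kᵢ uᵢ)·w ≥ 0. -/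
/-!
Each tail term `ε ⟪uᵢ, w⟫` is at least `-ε ‖uᵢ‖ ‖w‖`, so the tail is at least `-ε ‖w‖ ∑ ‖uᵢ‖`,
while the head term `⟪u₀, w⟫ / (2ε)` is at least `μ / (2ε)`. The choice
`ε² = μ / (2 ‖w‖ ∑ ‖uᵢ‖)` makes these two bounds cancel exactly.
-/

open scoped BigOperators RealInnerProductSpace

theorem neg_mul_sum_norm_mul_norm_le_inner_smul_sum {F ι : Type*} [SeminormedAddCommGroup F]
    [InnerProductSpace ℝ F] (s : Finset ι) (u : ι → F) (w : F) {c : ℝ} (hc : 0 ≤ c) :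
    -(c * (∑ i ∈ s, ‖u i‖) * ‖w‖) ≤ ⟪c • ∑ i ∈ s, u i, w⟫ :=
  calc -(c * (∑ i ∈ s, ‖u i‖) * ‖w‖) ≤ -(‖c • ∑ i ∈ s, u i‖ * ‖w‖) := by
        rw [norm_smul, Real.norm_of_nonneg hc]
        gcongr
        exact norm_sum_le s u
    _ ≤ ⟪c • ∑ i ∈ s, u i, w⟫ := neg_le_of_abs_le (abs_real_inner_le_norm _ _)

theorem eq_sq_mul_of_eq_sqrt_div {ε μ d : ℝ} (hε : ε = √(μ / d)) (hεpos : 0 < ε) :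
    μ = ε ^ 2 * d := by
  have hquot : 0 < μ / d := Real.sqrt_pos.mp (hε ▸ hεpos)
  have hd : d ≠ 0 := by
    rintro rfl
    simp at hquot
  rw [hε, Real.sq_sqrt hquot.le, div_mul_cancel₀ μ hd]

theorem half_dominant_outward_term_nonneg_general {n r : ℕ} (w : EuclideanSpace ℝ (Fin n))
    (u : Fin (r + 1) → EuclideanSpace ℝ (Fin n))
    (h0 : (0 : ℝ) < inner ℝ (u 0) w)
    (μ : ℝ)
    (hμmin : ∀ i, (0 : ℝ) < inner ℝ (u i) w → μ ≤ (inner ℝ (u i) w : ℝ))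
    (ε : ℝ) (hε : ε = Real.sqrt (μ / (2 * ‖w‖ * ∑ i, ‖u i‖))) (hεpos : 0 < ε)
    (k : Fin (r + 1) → ℝ) (hk0 : k 0 = 1 / ε) (hki : ∀ i, i ≠ 0 → k i = ε) :
    (0 : ℝ) ≤ inner ℝ ((k 0 / 2) • u 0 + ∑ i ∈ Finset.univ.erase 0, k i • u i) w := by
  set S := ∑ i, ‖u i‖
  have hμ : μ = ε ^ 2 * (2 * ‖w‖ * S) := eq_sq_mul_of_eq_sqrt_div hε hεpos
  have htail_eq : ∑ i ∈ Finset.univ.erase 0, k i • u i = ε • ∑ i ∈ Finset.univ.erase 0, u i := by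
    rw [Finset.smul_sum]
    exact Finset.sum_congr rfl fun i hi ↦ by rw [hki i (Finset.ne_of_mem_erase hi)]
  have htail : -(ε * S * ‖w‖) ≤ ⟪ε • ∑ i ∈ Finset.univ.erase 0, u i, w⟫ := by
    refine le_trans ?_ (neg_mul_sum_norm_mul_norm_le_inner_smul_sum _ u w hεpos.le)
    gcongr
    exact Finset.sum_le_sum_of_subset_of_nonneg (Finset.erase_subset _ _) fun i _ _ ↦ norm_nonneg _
  have hhead : μ ≤ ⟪u 0, w⟫ := hμmin 0 h0
  rw [inner_add_left, real_inner_smul_left, htail_eq, hk0]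
  calc (0 : ℝ) = 1 / ε / 2 * μ + -(ε * S * ‖w‖) := by
        rw [hμ]
        field_simp
        ring
    _ ≤ 1 / ε / 2 * ⟪u 0, w⟫ + ⟪ε • ∑ i ∈ Finset.univ.erase 0, u i, w⟫ := by gcongr

/-- Estimate (39) in the converse theorem: with rate constants at the extremes of
`[ε, 1/ε]` for the specific `ε` built from the minimal positive projection, half of the
dominant outward-pointing term dominates all the other terms. -/
theorem half_dominant_outward_term_nonneg {n r : ℕ} (w : EuclideanSpace ℝ (Fin n))
    (hw : 0 < ‖w‖) (u : Fin (r + 1) → EuclideanSpace ℝ (Fin n))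
    (h0 : (0 : ℝ) < inner ℝ (u 0) w)
    (μ : ℝ)
    (hμmem : ∃ i, (0 : ℝ) < inner ℝ (u i) w ∧ μ = (inner ℝ (u i) w : ℝ))
    (hμmin : ∀ i, (0 : ℝ) < inner ℝ (u i) w → μ ≤ (inner ℝ (u i) w : ℝ))
    (ε : ℝ) (hε : ε = Real.sqrt (μ / (2 * ‖w‖ * ∑ i, ‖u i‖))) (hεpos : 0 < ε)
    (k : Fin (r + 1) → ℝ) (hk0 : k 0 = 1 / ε) (hki : ∀ i, i ≠ 0 → k i = ε) :
    (0 : ℝ) ≤ inner ℝ ((k 0 / 2) • u 0 + ∑ i ∈ Finset.univ.erase 0, k i • u i) w :=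
  half_dominant_outward_term_nonneg_general w u h0 μ hμmin ε hε hεpos k hk0 hki
end
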